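/- (Pointwise Smith immersion inequality.) Let A : V₁ → V₂ be a linear map between oriented real inner product spaces with dim V₁ = k, and let α be an alternating k-form on V₂ of comass at most one. Then for any oriented orthonormal basis e₁, …, e_k of V₁, α(A e₁, …, A e_k) ≤ (|A|/√k)^k. Equality holds if and only if A is conformal with dilation λ = |A|/√k, and either A = 0 or the k-plane A(V₁) with its induced orientation is calibrated by α (i.e., α attains the value 1 on the unit oriented simple k-vector of A(V₁)). -/

import Mathlib

open scoped RealInnerProductSpace

lemma amgm_aux (k : ℕ) (hk : 1 ≤ k) (z : Fin k → ℝ) (hz : ∀ i, 0 ≤ z i) :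
    ∏ i, z i ≤ ((∑ i, z i) / k) ^ k := by
  have hk0 : (0:ℝ) < k := by exact_mod_cast hk
  have h := Real.geom_mean_le_arith_mean (Finset.univ : Finset (Fin k)) (fun _ => 1) z
    (fun _ _ => zero_le_one) (by simp [hk0]) (fun i _ => hz i)
  simp only [Real.rpow_one, one_mul, Finset.sum_const, Finset.card_univ, Fintype.card_fin,
    nsmul_eq_mul, mul_one] at h
  have hP : (0:ℝ) ≤ ∏ i, z i := Finset.prod_nonneg fun i _ => hz i
  have h2 : ((∏ i, z i) ^ ((k:ℝ)⁻¹)) ^ (k:ℝ) ≤ (((∑ i, z i) / k)) ^ (k:ℝ) := by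
    apply Real.rpow_le_rpow (Real.rpow_nonneg hP _) h (le_of_lt hk0)
  rw [← Real.rpow_natCast ((∑ i, z i) / k) k, ← Real.rpow_mul hP,
    inv_mul_cancel₀ (ne_of_gt hk0), Real.rpow_one] at *
  convert h2 using 2

lemma prod_norm_le (k : ℕ) (hk : 1 ≤ k) (x : Fin k → ℝ) (hx : ∀ i, 0 ≤ x i) :
    ∏ i, x i ≤ (Real.sqrt (∑ i, x i ^ 2) / Real.sqrt k) ^ k := by
  have hk0 : (0:ℝ) < k := by exact_mod_cast hk
  set S : ℝ := ∑ i, x i ^ 2 with hS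
  have hS0 : 0 ≤ S := Finset.sum_nonneg fun i _ => sq_nonneg _
  set lam : ℝ := Real.sqrt S / Real.sqrt k with hlam
  have hlam0 : 0 ≤ lam := div_nonneg (Real.sqrt_nonneg _) (Real.sqrt_nonneg _)
  have hlamsq : lam ^ 2 = S / k := by
    rw [hlam, div_pow, Real.sq_sqrt hS0, Real.sq_sqrt (le_of_lt hk0)]
  refine (pow_le_pow_iff_left₀ (Finset.prod_nonneg fun i _ => hx i)
    (pow_nonneg hlam0 _) two_ne_zero).1 ?_
  calc (∏ i, x i) ^ 2 = ∏ i, x i ^ 2 := by rw [Finset.prod_pow]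
    _ ≤ (S / k) ^ k := amgm_aux k hk _ fun i => sq_nonneg _
    _ = (lam ^ k) ^ 2 := by rw [← pow_mul, mul_comm k 2, pow_mul, hlamsq]

lemma key_ineq {V₂ : Type*} [NormedAddCommGroup V₂] [InnerProductSpace ℝ V₂]
    (k : ℕ) (α : V₂ [⋀^Fin k]→ₗ[ℝ] ℝ)
    (hcomass : ∀ v : Fin k → V₂, Orthonormal ℝ v → |α v| ≤ 1)
    (v : Fin k → V₂) : |α v| ≤ ∏ i, ‖v i‖ := by
  by_cases hv : LinearIndependent ℝ v
  · set W := Submodule.span ℝ (Set.range v) with hW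
    haveI : FiniteDimensional ℝ W := FiniteDimensional.span_of_finite ℝ (Set.finite_range v)
    have hrank : Module.finrank ℝ W = k := by
      rw [hW, finrank_span_eq_card hv, Fintype.card_fin]
    let u : OrthonormalBasis (Fin k) ℝ W :=
      (stdOrthonormalBasis ℝ W).reindex (finCongr hrank)
    let β : W [⋀^Fin k]→ₗ[ℝ] ℝ := α.compLinearMap W.subtype
    have hβ : β = β u.toBasis • u.toBasis.det := AlternatingMap.eq_smul_basis_det u.toBasis β
    have hmem : ∀ i, v i ∈ W := fun i => Submodule.subset_span (Set.mem_range_self i)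
    set v' : Fin k → W := fun i => ⟨v i, hmem i⟩ with hv'
    have hαv : α v = β v' := by
      simp only [β, AlternatingMap.compLinearMap_apply]
      congr 1
    have hβu : |β u.toBasis| ≤ 1 := by
      have ho : Orthonormal ℝ (fun i => ((u i : W) : V₂)) := by
        have h1 := u.orthonormal
        rw [orthonormal_iff_ite] at h1 ⊢
        intro i j
        rw [← Submodule.coe_inner]
        exact h1 i j
      have h2 : (β fun i => u.toBasis i) = α fun i => ((u i : W) : V₂) := by
        simp [β, AlternatingMap.compLinearMap_apply]
      rw [show (β u.toBasis = β fun i => u.toBasis i) from rfl, h2]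
      exact hcomass _ ho
    haveI : Fact (Module.finrank ℝ W = k) := ⟨hrank⟩
    set o : Orientation ℝ W (Fin k) := u.toBasis.orientation with ho
    have hdet : |u.toBasis.det v'| ≤ ∏ i, ‖v' i‖ := by
      have := o.abs_volumeForm_apply_le v'
      rwa [o.volumeForm_robust u rfl] at this
    have hnorm : ∀ i, ‖v' i‖ = ‖v i‖ := fun i => rfl
    have hsplit : α v = β u.toBasis * u.toBasis.det v' := by
      rw [hαv]
      conv_lhs => rw [hβ]
      simp
    calc |α v| = |β u.toBasis| * |u.toBasis.det v'| := by
          rw [hsplit, abs_mul]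
      _ ≤ 1 * ∏ i, ‖v' i‖ := mul_le_mul hβu hdet (abs_nonneg _) zero_le_one
      _ = ∏ i, ‖v i‖ := by simp [hnorm]
  · rw [α.map_linearDependent v hv, abs_zero]
    exact Finset.prod_nonneg fun i _ => norm_nonneg _

lemma sum_update_real {k : ℕ} (g : Fin k → ℝ) (j : Fin k) (c : ℝ) :
    ∑ l, Function.update g j c l = (∑ l, g l) - g j + c := by
  rw [Finset.sum_update_of_mem (Finset.mem_univ j)]
  rw [← Finset.sum_erase_add Finset.univ g (Finset.mem_univ j), Finset.sdiff_singleton_eq_erase]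
  ring

lemma inner_expand {E : Type*} [NormedAddCommGroup E] [InnerProductSpace ℝ E]
    {k : ℕ} (w : Fin k → E) (μ : ℝ) (hw : ∀ i j, ⟪w i, w j⟫ = if i = j then μ else 0)
    (c d : Fin k → ℝ) :
    ⟪∑ i, c i • w i, ∑ j, d j • w j⟫ = μ * ∑ i, c i * d i := by
  rw [sum_inner]
  have : ∀ i, ⟪c i • w i, ∑ j, d j • w j⟫ = c i * (d i * μ) := by
    intro i
    rw [inner_sum]
    simp_rw [real_inner_smul_left, real_inner_smul_right, hw, mul_ite, mul_zero]
    simp [Finset.sum_ite_eq' Finset.univ, mul_comm]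
  simp_rw [this, Finset.mul_sum]
  congr 1; ext i; ring

set_option maxHeartbeats 1000000 in
/-- Pointwise Smith immersion inequality. For a linear map `A : V₁ → V₂` with
`dim V₁ = k` and a `k`-form `α` of comass at most one on `V₂`, and any oriented
orthonormal basis `b` of `V₁`: `α(A b₁, …, A b_k) ≤ (|A|/√k)^k` where
`|A| = √(∑ ‖A bᵢ‖²)` is the Hilbert–Schmidt norm. Equality holds iff `A` is conformal
with dilation `λ = |A|/√k` and either `A = 0` or the oriented image `k`-plane is
calibrated by `α` (i.e. `α` takes the value `1` on its unit oriented simple vector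
`(1/λ)A b₁ ∧ ⋯ ∧ (1/λ)A b_k`). -/
theorem stmt_5 {V₁ V₂ : Type*} [NormedAddCommGroup V₁] [InnerProductSpace ℝ V₁]
    [NormedAddCommGroup V₂] [InnerProductSpace ℝ V₂]
    (k : ℕ) (hk : 1 ≤ k) [Fact (Module.finrank ℝ V₁ = k)]
    (o : Orientation ℝ V₁ (Fin k))
    (A : V₁ →ₗ[ℝ] V₂) (α : V₂ [⋀^Fin k]→ₗ[ℝ] ℝ)
    (hcomass : ∀ v : Fin k → V₂, Orthonormal ℝ v → |α v| ≤ 1)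
    (b : OrthonormalBasis (Fin k) ℝ V₁) (hb : b.toBasis.orientation = o) :
    (α fun i => A (b i)) ≤ (Real.sqrt (∑ i, ‖A (b i)‖ ^ 2) / Real.sqrt k) ^ k ∧
    ((α fun i => A (b i)) = (Real.sqrt (∑ i, ‖A (b i)‖ ^ 2) / Real.sqrt k) ^ k ↔
      ((∀ v w : V₁, ⟪A v, A w⟫ = (∑ i, ‖A (b i)‖ ^ 2) / k * ⟪v, w⟫) ∧
        (A = 0 ∨
          (α fun i => (Real.sqrt k / Real.sqrt (∑ j, ‖A (b j)‖ ^ 2)) • A (b i)) = 1))) := by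
  classical
  have hk0 : (0:ℝ) < k := by exact_mod_cast hk
  have hsqrtk : 0 < Real.sqrt k := Real.sqrt_pos.2 hk0
  set v : Fin k → V₂ := fun i => A (b i) with hv
  set S : ℝ := ∑ i, ‖A (b i)‖ ^ 2 with hS
  have hS0 : 0 ≤ S := Finset.sum_nonneg fun i _ => sq_nonneg _
  set lam : ℝ := Real.sqrt S / Real.sqrt k with hlam
  have hlam0 : 0 ≤ lam := div_nonneg (Real.sqrt_nonneg _) (Real.sqrt_nonneg _)
  have hineq : ∀ w : Fin k → V₂,
      α w ≤ (Real.sqrt (∑ i, ‖w i‖ ^ 2) / Real.sqrt k) ^ k := fun w =>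
    (le_abs_self _).trans ((key_ineq k α hcomass w).trans
      (prod_norm_le k hk (fun i => ‖w i‖) fun i => norm_nonneg _))
  have hSv : S = ∑ i, ‖v i‖ ^ 2 := rfl
  refine ⟨hineq v, ?_⟩
  constructor
  · -- forward direction of the iff
    intro heq
    by_cases hA0 : A = 0
    · refine ⟨fun x y => ?_, Or.inl hA0⟩
      rw [hS]
      simp [hA0]
    · have hvnz0 : ∃ i, v i ≠ 0 := by
        by_contra h
        push_neg at h
        exact hA0 (b.toBasis.ext fun i => by
          simpa using h i)
      have hSpos : 0 < S := by
        rcases hvnz0 with ⟨i, hi⟩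
        rw [hSv]
        exact Finset.sum_pos' (fun j _ => sq_nonneg _)
          ⟨i, Finset.mem_univ i, by have := norm_pos_iff.2 hi; positivity⟩
      have hlampos : 0 < lam := div_pos (Real.sqrt_pos.2 hSpos) hsqrtk
      have hvnz : ∀ i, v i ≠ 0 := by
        intro i hi0
        have h0 : α v = 0 := α.map_coord_zero i hi0
        rw [heq] at h0
        exact absurd h0 (ne_of_gt (pow_pos hlampos k))
      have hcontra : ∀ w : Fin k → V₂, α w = α v → ∑ l, ‖w l‖ ^ 2 < S → False := by
        intro w hww hws
        have h1 := hineq w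
        have h2 : (Real.sqrt (∑ l, ‖w l‖ ^ 2) / Real.sqrt k) ^ k < lam ^ k := by
          have hlt : Real.sqrt (∑ l, ‖w l‖ ^ 2) < Real.sqrt S :=
            Real.sqrt_lt_sqrt (Finset.sum_nonneg fun l _ => sq_nonneg _) hws
          rw [hlam]
          apply pow_lt_pow_left₀ (by gcongr) (by positivity) (by omega)
        rw [hww, heq] at h1
        linarith
      have horth : ∀ i j, i ≠ j → ⟪v i, v j⟫ = 0 := by
        intro i j hij
        by_contra hip
        have hvipos : (0:ℝ) < ‖v i‖ := norm_pos_iff.2 (hvnz i)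
        set t : ℝ := ⟪v i, v j⟫ / ‖v i‖ ^ 2 with ht
        set w : Fin k → V₂ := Function.update v j (v j - t • v i) with hw
        have halph : α w = α v := by
          rw [hw, α.map_update_sub, Function.update_eq_self, α.map_update_smul,
            α.map_update_self v hij.symm]
          simp
        have hnj : ‖v j - t • v i‖ ^ 2 = ‖v j‖ ^ 2 - ⟪v i, v j⟫ ^ 2 / ‖v i‖ ^ 2 := by
          have e1 : ‖v j - t • v i‖ ^ 2
              = ‖v j‖ ^ 2 - 2 * (t * ⟪v j, v i⟫) + (|t| * ‖v i‖) ^ 2 := by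
            rw [norm_sub_sq_real, real_inner_smul_right, norm_smul, Real.norm_eq_abs]
          rw [e1, mul_pow, sq_abs, real_inner_comm (v j) (v i), ht]
          field_simp
          rw [real_inner_comm (v j) (v i)]
          ring
        have hptw : (fun l => ‖w l‖ ^ 2)
            = Function.update (fun l => ‖v l‖ ^ 2) j (‖v j - t • v i‖ ^ 2) := by
          funext l
          rw [hw]
          exact Function.apply_update (fun _ y => ‖y‖ ^ 2) v j _ l
        have hsum : ∑ l, ‖w l‖ ^ 2 < S := by
          have e2 : ∑ l, ‖w l‖ ^ 2
              = (∑ l, ‖v l‖ ^ 2) - ‖v j‖ ^ 2 + ‖v j - t • v i‖ ^ 2 := by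
            rw [show (∑ l, ‖w l‖ ^ 2)
                = ∑ l, Function.update (fun l => ‖v l‖ ^ 2) j (‖v j - t • v i‖ ^ 2) l from by
              rw [← hptw]]
            exact sum_update_real _ j _
          have hpos : 0 < ⟪v i, v j⟫ ^ 2 / ‖v i‖ ^ 2 := by positivity
          rw [e2, hnj, ← hSv]
          linarith
        exact hcontra w halph hsum
      have hnormeq : ∀ i j, ‖v i‖ = ‖v j‖ := by
        intro i j
        rcases eq_or_ne i j with rfl | hij
        · rfl
        by_contra hne
        have hvi : 0 < ‖v i‖ := norm_pos_iff.2 (hvnz i)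
        have hvj : 0 < ‖v j‖ := norm_pos_iff.2 (hvnz j)
        set s : ℝ := Real.sqrt (‖v j‖ / ‖v i‖) with hs
        have hspos : 0 < s := Real.sqrt_pos.2 (by positivity)
        have hs2 : s ^ 2 = ‖v j‖ / ‖v i‖ := Real.sq_sqrt (by positivity)
        set w₁ : Fin k → V₂ := Function.update v i (s • v i) with hw1
        set w : Fin k → V₂ := Function.update w₁ j (s⁻¹ • v j) with hw
        have hwj : w₁ j = v j := by
          rw [hw1]
          exact Function.update_of_ne hij.symm _ _
        have halph : α w = α v := by
          rw [hw, α.map_update_smul]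
          rw [show Function.update w₁ j (v j) = w₁ from by
            conv_lhs => rw [← hwj]
            exact Function.update_eq_self _ _]
          rw [hw1, α.map_update_smul, Function.update_eq_self, smul_smul,
            inv_mul_cancel₀ (ne_of_gt hspos), one_smul]
        have hptw : (fun l => ‖w l‖ ^ 2)
            = Function.update (Function.update (fun l => ‖v l‖ ^ 2) i (‖s • v i‖ ^ 2)) j
              (‖s⁻¹ • v j‖ ^ 2) := by
          funext l
          rw [hw]
          rw [Function.apply_update (fun _ y => ‖y‖ ^ 2) w₁ j _ l]
          congr 1
          funext m
          rw [hw1]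
          exact Function.apply_update (fun _ y => ‖y‖ ^ 2) v i _ m
        have hsmul1 : ‖s • v i‖ ^ 2 = ‖v i‖ * ‖v j‖ := by
          rw [norm_smul, mul_pow, Real.norm_eq_abs, sq_abs, hs2]
          field_simp
        have hsmul2 : ‖s⁻¹ • v j‖ ^ 2 = ‖v i‖ * ‖v j‖ := by
          rw [norm_smul, mul_pow, Real.norm_eq_abs, abs_inv, inv_pow, sq_abs, hs2]
          field_simp
        have hsum : ∑ l, ‖w l‖ ^ 2 < S := by
          have e2 : ∑ l, ‖w l‖ ^ 2
              = (∑ l, Function.update (fun l => ‖v l‖ ^ 2) i (‖s • v i‖ ^ 2) l)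
                - ‖v j‖ ^ 2 + ‖s⁻¹ • v j‖ ^ 2 := by
            rw [show (∑ l, ‖w l‖ ^ 2)
                = ∑ l, Function.update (Function.update (fun l => ‖v l‖ ^ 2) i
                    (‖s • v i‖ ^ 2)) j (‖s⁻¹ • v j‖ ^ 2) l from by rw [← hptw]]
            rw [sum_update_real]
            rw [Function.update_of_ne hij.symm]
          have e3 : ∑ l, Function.update (fun l => ‖v l‖ ^ 2) i (‖s • v i‖ ^ 2) l
              = (∑ l, ‖v l‖ ^ 2) - ‖v i‖ ^ 2 + ‖s • v i‖ ^ 2 := sum_update_real _ i _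
          have hd : 0 < (‖v i‖ - ‖v j‖) ^ 2 := by
            have hne' : ‖v i‖ - ‖v j‖ ≠ 0 := sub_ne_zero.2 hne
            positivity
          rw [e2, e3, hsmul1, hsmul2, ← hSv]
          nlinarith
        exact hcontra w halph hsum
      have hnormsq : ∀ i, ‖v i‖ ^ 2 = S / k := by
        intro i
        have e : S = ∑ _j : Fin k, ‖v i‖ ^ 2 := by
          rw [hSv]
          exact Finset.sum_congr rfl fun j _ => by rw [hnormeq j i]
        rw [e]
        rw [Finset.sum_const, Finset.card_univ, Fintype.card_fin, nsmul_eq_mul]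
        field_simp
      have hvij : ∀ i j, ⟪v i, v j⟫ = if i = j then S / k else 0 := by
        intro i j
        by_cases h : i = j
        · subst h
          rw [if_pos rfl, real_inner_self_eq_norm_sq, hnormsq]
        · rw [if_neg h]
          exact horth i j h
      refine ⟨fun x y => ?_, Or.inr ?_⟩
      · have hbij : ∀ i j, ⟪b i, b j⟫ = if i = j then (1:ℝ) else 0 :=
          orthonormal_iff_ite.1 b.orthonormal
        have hAx : A x = ∑ i, b.repr x i • v i := by
          conv_lhs => rw [← b.sum_repr x]
          rw [map_sum]
          exact Finset.sum_congr rfl fun i _ => by rw [map_smul]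
        have hAy : A y = ∑ i, b.repr y i • v i := by
          conv_lhs => rw [← b.sum_repr y]
          rw [map_sum]
          exact Finset.sum_congr rfl fun i _ => by rw [map_smul]
        have hxy : ⟪x, y⟫ = ∑ i, b.repr x i * b.repr y i := by
          conv_lhs => rw [← b.sum_repr x, ← b.sum_repr y]
          rw [inner_expand b 1 hbij, one_mul]
        rw [hAx, hAy, inner_expand v (S / k) hvij, hxy]
      · have hinv : Real.sqrt (k : ℝ) / Real.sqrt S = lam⁻¹ := by rw [hlam, inv_div]
        have h1 : (α fun i => lam⁻¹ • v i) = lam⁻¹ ^ k * α v := by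
          have h2 := α.toMultilinearMap.map_smul_univ (fun _ : Fin k => lam⁻¹) v
          simpa using h2
        rw [hinv]
        show (α fun i => lam⁻¹ • v i) = 1
        rw [h1, heq, ← mul_pow, inv_mul_cancel₀ (ne_of_gt hlampos), one_pow]
  · -- backward direction of the iff
    rintro ⟨hconf, hcal | hcal⟩
    · have hS0' : S = 0 := by rw [hS]; simp [hcal]
      have hv0 : v = fun _ : Fin k => (0 : V₂) := by funext i; simp [hv, hcal]
      have h1 : α v = 0 := by rw [hv0]; exact α.map_coord_zero ⟨0, hk⟩ rfl
      have h2 : lam = 0 := by rw [hlam, hS0']; simp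
      rw [h1, h2, zero_pow (by omega : k ≠ 0)]
    · have hSpos : 0 < S := by
        rcases lt_or_eq_of_le hS0 with h | h
        · exact h
        · exfalso
          have hz : ∀ i, v i = 0 := by
            intro i
            have := (Finset.sum_eq_zero_iff_of_nonneg
              (fun j _ => sq_nonneg ‖A (b j)‖)).1 (by rw [← hS]; exact h.symm) i
              (Finset.mem_univ i)
            have : ‖v i‖ = 0 := by
              have := this
              nlinarith [norm_nonneg (v i), this]
            simpa using this
          have : (α fun i => (Real.sqrt k / Real.sqrt S) • A (b i)) = 0 := by
            have hz' : (fun i => (Real.sqrt k / Real.sqrt S) • A (b i)) =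
                fun _ : Fin k => (0 : V₂) := by
              funext i
              rw [show A (b i) = v i from rfl, hz i, smul_zero]
            rw [hz']
            exact α.map_coord_zero ⟨0, hk⟩ rfl
          rw [this] at hcal
          norm_num at hcal
      have hlampos : 0 < lam := div_pos (Real.sqrt_pos.2 hSpos) hsqrtk
      have hinv : Real.sqrt k / Real.sqrt S = lam⁻¹ := by
        rw [hlam, inv_div]
      rw [hinv] at hcal
      have hexp : α v = lam ^ k * α (fun i => lam⁻¹ • v i) := by
        have h1 : v = fun i => lam • (lam⁻¹ • v i) := by
          funext i
          rw [smul_smul, mul_inv_cancel₀ (ne_of_gt hlampos), one_smul]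
        conv_lhs => rw [h1]
        have := α.toMultilinearMap.map_smul_univ (fun _ : Fin k => lam)
          (fun i => lam⁻¹ • v i)
        simpa using this
      rw [hexp, hcal, mul_one]
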